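/- arXiv:2401.06353 — 2 statements merged into one kernel-verified Lean document; each statement's English description precedes it below -/
import Mathlib

section
/- Let M be a reduced Krull monoid with torsion class group and σ : M → ℝ^× a scale on M. Then the sum ∑_{x ∈ ⟨S(M)⟩} 1/σ(x) converges if and only if ∑_{a ∈ S(M)} 1/σ(a) converges, and in that case ∑_{x ∈ ⟨S(M)⟩} 1/σ(x) = ∏_{a ∈ S(M)} 1/(1 − 1/σ(a)). -/
/-- `a` is an atom of the (cancellative commutative) monoid `M`. -/
def IsAtomM {M : Type*} [CancelCommMonoid M] (a : M) : Prop :=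
  ¬ IsUnit a ∧ ∀ b c : M, a = b * c → IsUnit b ∨ IsUnit c

/-- `a` is a strong atom of `M`: an atom all of whose powers `a ^ n` factor uniquely into
atoms of `M` (namely as `n` copies of `a`). -/
def IsStrongAtomM {M : Type*} [CancelCommMonoid M] (a : M) : Prop :=
  IsAtomM a ∧ ∀ n : ℕ, 0 < n → ∀ s : Multiset M,
    (∀ b ∈ s, IsAtomM b) → s.prod = a ^ n → s = Multiset.replicate n a

/-- `p` is a prime element of `M`. -/
def IsPrimeM {M : Type*} [CancelCommMonoid M] (p : M) : Prop :=
  ¬ IsUnit p ∧ ∀ b c : M, p ∣ b * c → p ∣ b ∨ p ∣ c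

/-- `M` is reduced: its only unit is the identity. -/
def IsReducedM (M : Type*) [Monoid M] : Prop := ∀ u : M, IsUnit u → u = 1

/-- `τ : M → F`, with `F` the free commutative monoid on `ι` (written multiplicatively as
`Multiplicative (ι →₀ ℕ)`), is a divisor theory: (1) `τ b ∣ τ c` implies `b ∣ c`;
(2) every `d ∈ F` is a greatest common divisor of finitely many values of `τ`. -/
def IsDivisorTheory {M ι : Type*} [CancelCommMonoid M]
    (τ : M →* Multiplicative (ι →₀ ℕ)) : Prop :=
  (∀ b c : M, τ b ∣ τ c → b ∣ c) ∧
  (∀ d : Multiplicative (ι →₀ ℕ), ∃ s : Finset M, s.Nonempty ∧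
    (∀ b ∈ s, d ∣ τ b) ∧ ∀ e : Multiplicative (ι →₀ ℕ), (∀ b ∈ s, e ∣ τ b) → e ∣ d)

/-- The class group `F/τ(M)` of the divisor theory `τ` is a torsion group: every `d ∈ F`
has a power whose class is trivial, i.e. `d ^ n · τ b = τ c` for some `n ≥ 1` and `b, c ∈ M`. -/
def HasTorsionClassGroup {M ι : Type*} [CancelCommMonoid M]
    (τ : M →* Multiplicative (ι →₀ ℕ)) : Prop :=
  ∀ d : Multiplicative (ι →₀ ℕ), ∃ n : ℕ, 0 < n ∧ ∃ b c : M, d ^ n * τ b = τ c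

/-- The sum `∑_{x ∈ α} f x` of nonnegative terms converges to `l` in the sense of the paper:
`l` is the least upper bound (hence supremum) of the finite partial sums. -/
def SumConvergesTo {α : Type*} (f : α → ℝ) (l : ℝ) : Prop :=
  IsLUB {y : ℝ | ∃ s : Finset α, y = ∑ x ∈ s, f x} l

/-- The product `∏_{x ∈ α} f x` of terms `≥ 1` converges to `l` in the sense of the paper:
`l` is the least upper bound (hence supremum) of the finite partial products. -/
def ProdConvergesTo {α : Type*} (f : α → ℝ) (l : ℝ) : Prop :=
  IsLUB {y : ℝ | ∃ s : Finset α, y = ∏ x ∈ s, f x} l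

/-!
In a reduced Krull monoid with torsion class group, distinct strong atoms have disjoint divisor
supports: if a prime divisor `p` divides both `τ a` and `τ b`, some power `p ^ n` is the divisor
of an element `u`, which then divides both `a ^ n` and `b ^ n`; an atom dividing `u` must equal
`a` and `b` by uniqueness of the factorizations of these powers. Reading off the multiplicity of
`p` shows that `⟨S(M)⟩` is free on `S(M)`, so `∑_{x ∈ ⟨S(M)⟩} 1/σ(x)` is the sum over exponent
vectors `e` of `∏ (1/σ(a)) ^ e(a)`. The partial sums of that series and the finite Euler
products `∏_{a ∈ t} (1 - 1/σ(a))⁻¹` bound each other (expand truncated geometric series), so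
they have the same supremum. The partial sums of `∑ 1/σ(a)` are among those of the series, and
conversely, if it converges then so does `∑ -log (1 - 1/σ(a))`, whose exponential bounds every
finite Euler product.
-/

open Finset

theorem Finset.sum_finsupp_prod_eq_prod_sum {ι α R : Type*} [Zero α] [CommSemiring R]
    (s : Finset ι) (t : ι → Finset α) (f : ι → α → R) (hf : ∀ i, f i 0 = 1) :
    ∑ e ∈ s.finsupp t, e.prod f = ∏ i ∈ s, ∑ k ∈ t i, f i k := by
  classical
  rw [prod_sum, Finset.finsupp, sum_map]
  refine sum_congr rfl fun p _ => ?_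
  rw [Function.Embedding.coeFn_mk,
    Finsupp.prod_of_support_subset _ (Finsupp.support_indicator_subset s p) _ fun i _ => hf i,
    ← prod_attach]
  exact prod_congr rfl fun i _ => by rw [Finsupp.indicator_of_mem i.2]

theorem sumConvergesTo_comp_equiv {α β : Type*} (e : α ≃ β) (f : β → ℝ) (l : ℝ) :
    SumConvergesTo (f ∘ e) l ↔ SumConvergesTo f l := by
  have hsums : {y : ℝ | ∃ s : Finset α, y = ∑ x ∈ s, f (e x)}
      = {y | ∃ s : Finset β, y = ∑ x ∈ s, f x} := by
    ext y
    refine ⟨fun ⟨s, hs⟩ => ⟨s.map e.toEmbedding, by simpa using hs⟩,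
      fun ⟨s, hs⟩ => ⟨s.map e.symm.toEmbedding, by simpa [sum_map] using hs⟩⟩
  simp only [SumConvergesTo, Function.comp_apply, hsums]

theorem exists_sumConvergesTo_iff_bddAbove {α : Type*} (f : α → ℝ) :
    (∃ l, SumConvergesTo f l) ↔ BddAbove {y : ℝ | ∃ s : Finset α, y = ∑ x ∈ s, f x} :=
  ⟨fun ⟨_, hl⟩ => ⟨_, hl.1⟩, Real.exists_isLUB ⟨0, ∅, by simp⟩⟩

section GeometricProduct

variable {A : Type*} {g : A → ℝ}

theorem sum_finsupp_range_prod_pow (t : Finset A) (N : ℕ) :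
    ∑ e ∈ t.finsupp fun _ => range N, e.prod (fun a n => g a ^ n)
      = ∏ a ∈ t, ∑ k ∈ range N, g a ^ k :=
  sum_finsupp_prod_eq_prod_sum t _ _ fun a => pow_zero (g a)

variable (hg0 : ∀ a, 0 ≤ g a) (hg1 : ∀ a, g a < 1)
include hg0 hg1

theorem exists_sum_finsuppProd_le_prod (s : Finset (A →₀ ℕ)) :
    ∃ t : Finset A, ∑ e ∈ s, e.prod (fun a n => g a ^ n) ≤ ∏ a ∈ t, (1 - g a)⁻¹ := by
  classical
  set t := s.biUnion Finsupp.support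
  set N := s.sup Finsupp.degree + 1
  have hbox : s ⊆ t.finsupp fun _ => range N := fun e he =>
    mem_finsupp_iff.2 ⟨subset_biUnion_of_mem _ he, fun a _ => mem_range.2 <|
      Nat.lt_succ_of_le ((Finsupp.le_degree a e).trans (le_sup (f := Finsupp.degree) he))⟩
  refine ⟨t, ?_⟩
  calc ∑ e ∈ s, e.prod (fun a n => g a ^ n)
      ≤ ∑ e ∈ t.finsupp fun _ => range N, e.prod (fun a n => g a ^ n) :=
        sum_le_sum_of_subset_of_nonneg hbox fun e _ _ =>
          prod_nonneg fun a _ => pow_nonneg (hg0 a) _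
    _ = ∏ a ∈ t, ∑ k ∈ range N, g a ^ k := sum_finsupp_range_prod_pow t N
    _ ≤ ∏ a ∈ t, (1 - g a)⁻¹ :=
        prod_le_prod (fun a _ => sum_nonneg fun k _ => pow_nonneg (hg0 a) k) fun a _ =>
          sum_le_hasSum _ (fun k _ => pow_nonneg (hg0 a) k)
            (hasSum_geometric_of_lt_one (hg0 a) (hg1 a))

theorem prod_le_of_mem_upperBounds_sum_finsuppProd (t : Finset A) {u : ℝ}
    (hu : u ∈ upperBounds
      {y | ∃ s : Finset (A →₀ ℕ), y = ∑ e ∈ s, e.prod fun a n => g a ^ n}) :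
    ∏ a ∈ t, (1 - g a)⁻¹ ≤ u := by
  refine le_of_tendsto (tendsto_finsetProd t fun a _ =>
    (hasSum_geometric_of_lt_one (hg0 a) (hg1 a)).tendsto_sum_nat)
    (Filter.Eventually.of_forall fun N => ?_)
  rw [← sum_finsupp_range_prod_pow]
  exact hu ⟨_, rfl⟩

theorem sumConvergesTo_finsuppProd_iff (l : ℝ) :
    SumConvergesTo (fun e : A →₀ ℕ => e.prod fun a n => g a ^ n) l ↔
      ProdConvergesTo (fun a => 1 / (1 - g a)) l := by
  suffices upperBounds {y | ∃ s : Finset (A →₀ ℕ), y = ∑ e ∈ s, e.prod fun a n => g a ^ n}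
      = upperBounds {y | ∃ t : Finset A, y = ∏ a ∈ t, 1 / (1 - g a)} by
    simp only [SumConvergesTo, ProdConvergesTo, IsLUB, this]
  ext u
  simp only [one_div]
  refine ⟨fun hu => ?_, fun hu => ?_⟩
  · rintro _ ⟨t, rfl⟩
    exact prod_le_of_mem_upperBounds_sum_finsuppProd hg0 hg1 t hu
  · rintro _ ⟨s, rfl⟩
    obtain ⟨t, hst⟩ := exists_sum_finsuppProd_le_prod hg0 hg1 s
    exact hst.trans (hu ⟨t, rfl⟩)

theorem prod_inv_one_sub_le_exp_tsum (hg : Summable g) (t : Finset A) :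
    ∏ a ∈ t, (1 - g a)⁻¹ ≤ Real.exp (∑' a, -Real.log (1 - g a)) := by
  have hpos : ∀ a, 0 < 1 - g a := fun a => sub_pos.2 (hg1 a)
  have hlog : Summable fun a => -Real.log (1 - g a) := by
    simpa [sub_eq_add_neg] using (Real.summable_log_one_add_of_summable hg.neg).neg
  calc ∏ a ∈ t, (1 - g a)⁻¹ = Real.exp (∑ a ∈ t, -Real.log (1 - g a)) := by
        rw [Real.exp_sum]
        exact prod_congr rfl fun a _ => by rw [Real.exp_neg, Real.exp_log (hpos a)]
    _ ≤ Real.exp (∑' a, -Real.log (1 - g a)) :=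
        Real.exp_le_exp.2 <| hlog.sum_le_tsum t fun a _ =>
          neg_nonneg.2 <| Real.log_nonpos (hpos a).le (by linarith [hg0 a])

theorem exists_sumConvergesTo_finsuppProd_iff :
    (∃ l, SumConvergesTo (fun e : A →₀ ℕ => e.prod fun a n => g a ^ n) l) ↔
      ∃ l, SumConvergesTo g l := by
  simp only [exists_sumConvergesTo_iff_bddAbove]
  refine ⟨fun ⟨u, hu⟩ => ⟨u, ?_⟩, fun ⟨u, hu⟩ => ?_⟩
  · rintro _ ⟨t, rfl⟩
    let single₁ : A ↪ (A →₀ ℕ) := ⟨(Finsupp.single · 1), Finsupp.single_left_injective one_ne_zero⟩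
    refine le_trans (le_of_eq ?_) (hu ⟨t.map single₁, rfl⟩)
    simp [single₁, sum_map]
  · have hg : Summable g := summable_of_sum_le hg0 fun t => hu ⟨t, rfl⟩
    refine ⟨Real.exp (∑' a, -Real.log (1 - g a)), ?_⟩
    rintro _ ⟨s, rfl⟩
    obtain ⟨t, hst⟩ := exists_sum_finsuppProd_le_prod hg0 hg1 s
    exact hst.trans (prod_inv_one_sub_le_exp_tsum hg0 hg1 hg t)

end GeometricProduct

theorem Multiplicative.dvd_iff_toAdd_le {α : Type*} [AddCommMonoid α] [PartialOrder α]
    [CanonicallyOrderedAdd α] {d e : Multiplicative α} : d ∣ e ↔ d.toAdd ≤ e.toAdd := by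
  rw [le_iff_exists_add]
  exact ⟨fun ⟨c, hc⟩ => ⟨c.toAdd, congrArg toAdd hc⟩,
    fun ⟨c, hc⟩ => ⟨ofAdd c, congrArg ofAdd hc⟩⟩

section DivisorTheory

variable {M ι : Type*} [CancelCommMonoid M] {τ : M →* Multiplicative (ι →₀ ℕ)}

namespace IsDivisorTheory

variable (hdt : IsDivisorTheory τ)
include hdt

theorem dvd_iff {b c : M} : b ∣ c ↔ τ b ∣ τ c := ⟨map_dvd τ, hdt.1 b c⟩

theorem exists_map_eq_pow (htor : HasTorsionClassGroup τ) (d : Multiplicative (ι →₀ ℕ)) :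
    ∃ n : ℕ, 0 < n ∧ ∃ u : M, τ u = d ^ n := by
  obtain ⟨n, hn, b, c, h⟩ := htor d
  obtain ⟨u, rfl⟩ : b ∣ c := hdt.dvd_iff.2 ⟨d ^ n, by rw [← h, mul_comm]⟩
  rw [map_mul, mul_comm] at h
  exact ⟨n, hn, u, (mul_left_cancel h).symm⟩

variable (hred : IsReducedM M)
include hred

theorem eq_one_of_map_eq_one {b : M} (h : τ b = 1) : b = 1 :=
  hred b (isUnit_of_dvd_one ((hdt.dvd_iff).2 (by rw [h, map_one])))

theorem exists_multiset_isAtomM_prod_eq (x : M) :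
    ∃ s : Multiset M, (∀ b ∈ s, IsAtomM b) ∧ s.prod = x := by
  induction h : (τ x).toAdd.degree using Nat.strong_induction_on generalizing x with
  | _ n ih =>
  by_cases hx1 : x = 1
  · exact ⟨0, by simp, by simp [hx1]⟩
  by_cases hx : IsAtomM x
  · exact ⟨{x}, by simpa using hx, by simp⟩
  obtain ⟨b, c, rfl, hb, hc⟩ : ∃ b c, x = b * c ∧ ¬IsUnit b ∧ ¬IsUnit c := by
    simpa [IsAtomM, show ¬IsUnit x from fun h => hx1 (hred x h)] using hx
  have hdeg : ∀ y : M, ¬IsUnit y → 0 < (τ y).toAdd.degree := fun y hy =>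
    Nat.pos_of_ne_zero fun h0 => hy <| (hdt.eq_one_of_map_eq_one hred <|
      Multiplicative.toAdd.injective ((Finsupp.degree_eq_zero_iff _).1 h0)) ▸ isUnit_one
  have hsplit : (τ (b * c)).toAdd.degree = (τ b).toAdd.degree + (τ c).toAdd.degree := by
    simp
  obtain ⟨sb, hsb, rfl⟩ := ih _ (by have := hdeg c hc; omega) b rfl
  obtain ⟨sc, hsc, rfl⟩ := ih _ (by have := hdeg sb.prod hb; omega) c rfl
  refine ⟨sb + sc, fun a ha => ?_, Multiset.prod_add sb sc⟩
  rcases Multiset.mem_add.1 ha with ha | ha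
  exacts [hsb a ha, hsc a ha]

theorem exists_isAtomM_dvd {x : M} (hx : ¬IsUnit x) : ∃ c, IsAtomM c ∧ c ∣ x := by
  obtain ⟨s, hs, rfl⟩ := hdt.exists_multiset_isAtomM_prod_eq hred x
  obtain ⟨c, hc⟩ : ∃ c, c ∈ s :=
    Multiset.exists_mem_of_ne_zero fun h0 => hx <| by
      rw [h0, Multiset.prod_zero]
      exact isUnit_one
  exact ⟨c, hs c hc, Multiset.dvd_prod hc⟩

theorem eq_of_isAtomM_dvd_pow {a c : M} (ha : IsStrongAtomM a) (hc : IsAtomM c) {n : ℕ}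
    (hn : 0 < n) (hca : c ∣ a ^ n) : c = a := by
  obtain ⟨v, hv⟩ := hca
  obtain ⟨s, hs, rfl⟩ := hdt.exists_multiset_isAtomM_prod_eq hred v
  have hrep := ha.2 n hn (c ::ₘ s) (Multiset.forall_mem_cons.2 ⟨hc, hs⟩)
    (by rw [Multiset.prod_cons, hv])
  exact Multiset.eq_of_mem_replicate (hrep ▸ Multiset.mem_cons_self c s)

theorem disjoint_support_of_isStrongAtomM (htor : HasTorsionClassGroup τ) {a b : M}
    (ha : IsStrongAtomM a) (hb : IsStrongAtomM b) (hab : a ≠ b) :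
    Disjoint (τ a).toAdd.support (τ b).toAdd.support := by
  refine Finset.disjoint_left.2 fun i hia hib => hab ?_
  obtain ⟨n, hn, u, hu⟩ :=
    hdt.exists_map_eq_pow htor (Multiplicative.ofAdd (Finsupp.single i 1))
  have hdvd : ∀ x : M, i ∈ (τ x).toAdd.support → u ∣ x ^ n := fun x hx =>
    hdt.dvd_iff.2 <| by
      rw [hu, map_pow]
      refine pow_dvd_pow_of_dvd (Multiplicative.dvd_iff_toAdd_le.2 ?_) n
      simpa [Nat.one_le_iff_ne_zero] using hx
  have hu1 : ¬IsUnit u := fun h => by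
    have := congrArg (fun d => d.toAdd i) hu
    simp [hred u h] at this
    omega
  obtain ⟨c, hc, hcu⟩ := hdt.exists_isAtomM_dvd hred hu1
  exact (hdt.eq_of_isAtomM_dvd_pow hred ha hc hn (hcu.trans (hdvd a hia))).symm.trans
    (hdt.eq_of_isAtomM_dvd_pow hred hb hc hn (hcu.trans (hdvd b hib)))

theorem toAdd_map_finsuppProd_apply (htor : HasTorsionClassGroup τ)
    (e : {a : M // IsStrongAtomM a} →₀ ℕ) (a : {a : M // IsStrongAtomM a}) {i : ι}
    (hi : i ∈ (τ a).toAdd.support) :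
    (τ (e.prod fun b k => (b : M) ^ k)).toAdd i = e a * (τ a).toAdd i := by
  rw [map_finsuppProd, Finsupp.prod, toAdd_prod, Finsupp.finsetSum_apply]
  simp only [map_pow, toAdd_pow, Finsupp.smul_apply, smul_eq_mul]
  refine Finset.sum_eq_single a (fun b _ hba => ?_) fun ha => by
    rw [Finsupp.notMem_support_iff.1 ha, zero_mul]
  have hdisj := hdt.disjoint_support_of_isStrongAtomM hred htor b.2 a.2
    (Subtype.coe_injective.ne hba)
  rw [Finsupp.notMem_support_iff.1 (Finset.disjoint_right.1 hdisj hi), mul_zero]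

theorem injective_finsuppProd_strongAtoms (htor : HasTorsionClassGroup τ) :
    Function.Injective fun e : {a : M // IsStrongAtomM a} →₀ ℕ =>
      e.prod fun a n => (a : M) ^ n := by
  intro e₁ e₂ h
  ext a
  obtain ⟨i, hi⟩ : (τ a).toAdd.support.Nonempty := by
    rw [Finsupp.support_nonempty_iff, Ne, toAdd_eq_zero]
    exact fun h1 => a.2.1.1 (hdt.eq_one_of_map_eq_one hred h1 ▸ isUnit_one)
  have := congrArg (fun x => (τ x).toAdd i) h
  simp only [hdt.toAdd_map_finsuppProd_apply hred htor _ a hi] at this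
  exact Nat.eq_of_mul_eq_mul_right (Nat.pos_of_ne_zero (Finsupp.mem_support_iff.1 hi)) this

end IsDivisorTheory

end DivisorTheory

theorem Submonoid.bijective_finsuppProd_closure {M : Type*} [CommMonoid M] {p : M → Prop}
    (h : Function.Injective fun e : {a // p a} →₀ ℕ => e.prod fun a n => (a : M) ^ n) :
    Function.Bijective fun e : {a // p a} →₀ ℕ =>
      (⟨e.prod fun a n => (a : M) ^ n, prod_mem _ fun a _ => pow_mem (subset_closure a.2) _⟩ :
        closure {a | p a}) := by
  refine ⟨fun e₁ e₂ he => h (congrArg Subtype.val he), fun x => ?_⟩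
  have hx : (x : M) ∈ closure (Set.range ((↑) : {a // p a} → M)) := by
    rw [Subtype.range_coe_subtype]
    exact x.2
  obtain ⟨e, he⟩ := mem_closure_range_iff.1 hx
  exact ⟨e, Subtype.ext he.symm⟩

theorem one_div_map_finsuppProd {A M : Type*} [CommMonoid M] (σ : M →* ℝˣ) (v : A → M)
    (e : A →₀ ℕ) :
    1 / ((σ (e.prod fun a n => v a ^ n) : ℝˣ) : ℝ) =
      e.prod fun a n => (1 / ((σ (v a) : ℝˣ) : ℝ)) ^ n := by
  simp [Finsupp.prod, Units.coe_prod]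

/-- Generalized Euler product formula: for a scale `σ` on a reduced Krull monoid `M` with
torsion class group, the sum `∑_{x ∈ ⟨S(M)⟩} 1/σ(x)` converges iff `∑_{a ∈ S(M)} 1/σ(a)`
does, and in that case it equals the product `∏_{a ∈ S(M)} 1/(1 - 1/σ(a))`. -/
theorem euler_product_for_krull_monoids
    {M ι : Type*} [CancelCommMonoid M] (τ : M →* Multiplicative (ι →₀ ℕ))
    (hdt : IsDivisorTheory τ) (htor : HasTorsionClassGroup τ) (hred : IsReducedM M)
    (σ : M →* ℝˣ) (hσ : ∀ a : M, IsStrongAtomM a → 1 < ((σ a : ℝˣ) : ℝ)) :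
    ((∃ l : ℝ, SumConvergesTo
        (fun x : ↥(Submonoid.closure {a : M | IsStrongAtomM a}) => 1 / ((σ ↑x : ℝˣ) : ℝ)) l) ↔
      (∃ l : ℝ, SumConvergesTo
        (fun a : {a : M // IsStrongAtomM a} => 1 / ((σ ↑a : ℝˣ) : ℝ)) l)) ∧
    (∀ l : ℝ, SumConvergesTo
        (fun x : ↥(Submonoid.closure {a : M | IsStrongAtomM a}) => 1 / ((σ ↑x : ℝˣ) : ℝ)) l →
      ProdConvergesTo
        (fun a : {a : M // IsStrongAtomM a} => 1 / (1 - 1 / ((σ ↑a : ℝˣ) : ℝ))) l) := by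
  set g : {a : M // IsStrongAtomM a} → ℝ := fun a => 1 / ((σ ↑a : ℝˣ) : ℝ)
  have hg0 : ∀ a, 0 ≤ g a := fun a => one_div_nonneg.2 (by linarith [hσ a a.2])
  have hg1 : ∀ a, g a < 1 := fun a => (div_lt_one (by linarith [hσ a a.2])).2 (hσ a a.2)
  let φ := Equiv.ofBijective _
    (Submonoid.bijective_finsuppProd_closure (hdt.injective_finsuppProd_strongAtoms hred htor))
  have hsum : ∀ l, SumConvergesTo
      (fun x : ↥(Submonoid.closure {a : M | IsStrongAtomM a}) => 1 / ((σ ↑x : ℝˣ) : ℝ)) l ↔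
      SumConvergesTo (fun e : {a : M // IsStrongAtomM a} →₀ ℕ => e.prod fun a n => g a ^ n) l := by
    intro l
    rw [← sumConvergesTo_comp_equiv φ]
    congr! 2 with e
    exact one_div_map_finsuppProd σ _ e
  simp only [hsum]
  exact ⟨exists_sumConvergesTo_finsuppProd_iff hg0 hg1,
    fun l => (sumConvergesTo_finsuppProd_iff hg0 hg1 l).1⟩
end

section
/- Let M be a reduced Krull monoid with torsion class group and σ a scale on M such that ∑_{a ∈ S(M)} 1/σ(a) converges. Then M is a unique factorization monoid if and only if ∑_{x ∈ M} 1/σ(x) = ∏_{p ∈ P(M)} 1/(1 − 1/σ(p)), where P(M) is the set of prime elements of M. -/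
/-!
Every prime is a strong atom, and atoms dividing products of primes are prime, so `M` has unique
factorization exactly when it is generated by its primes. For a finite set `t` of primes, the
products `∏ p ^ e p` with all `e p ≤ N` are pairwise distinct, so their reciprocal scales sum to
`∏ p ∈ t, ∑ k ≤ N, σ(p)⁻ᵏ`, which tends to the partial Euler product over `t` as `N → ∞`.
If the primes generate `M`, every finite partial sum over `M` lies in such a box, so the sum and the
product have the same supremum; the product is finite because `∑ 1/σ(p)` converges (primes are
strong atoms). Conversely, if some `x` is not a product of primes, neither is `x²`, and `1/σ(x²)`
is a positive term missing from every box, so the product stays at least `1/σ(x²)` below the sum.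
-/

section

open Finset Filter Topology

variable {M : Type*} [CancelCommMonoid M]

theorem IsAtomM.eq_of_dvd (hred : IsReducedM M) {a b : M} (ha : IsAtomM a) (hb : ¬ IsUnit b)
    (h : b ∣ a) : b = a := by
  obtain ⟨c, rfl⟩ := h
  rcases ha.2 b c rfl with hb' | hc
  · exact absurd hb' hb
  · rw [hred c hc, mul_one]

theorem IsPrimeM.isAtomM {p : M} (hp : IsPrimeM p) : IsAtomM p := by
  refine ⟨hp.1, fun b c h => ?_⟩
  rcases hp.2 b c (h ▸ dvd_rfl) with ⟨d, rfl⟩ | ⟨d, rfl⟩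
  · exact Or.inr (.of_mul_eq_one_right d
      (mul_left_cancel (a := p) (by rw [mul_one, ← mul_assoc, ← h])))
  · exact Or.inl (.of_mul_eq_one d
      (mul_left_cancel (a := p) (by rw [mul_one, mul_left_comm, ← h])))

theorem IsPrimeM.exists_mem_multiset_dvd {p : M} (hp : IsPrimeM p) {m : Multiset M}
    (h : p ∣ m.prod) : ∃ a ∈ m, p ∣ a := by
  induction m using Multiset.induction with
  | empty => exact absurd (isUnit_of_dvd_one (by simpa using h)) hp.1
  | cons a m ih =>
    rw [Multiset.prod_cons] at h
    rcases hp.2 _ _ h with h | h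
    · exact ⟨a, Multiset.mem_cons_self a m, h⟩
    · obtain ⟨b, hb, hpb⟩ := ih h
      exact ⟨b, Multiset.mem_cons_of_mem hb, hpb⟩

theorem multiset_eq_of_prod_eq_of_isPrimeM (hred : IsReducedM M) {m n : Multiset M}
    (hm : ∀ p ∈ m, IsPrimeM p) (hn : ∀ p ∈ n, IsPrimeM p) (h : m.prod = n.prod) :
    m = n := by
  induction m using Multiset.induction generalizing n with
  | empty =>
    rcases Multiset.empty_or_exists_mem n with rfl | ⟨q, hq⟩
    · rfl
    · exact absurd (isUnit_of_dvd_one (by simpa [← h] using Multiset.dvd_prod hq)) (hn q hq).1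
  | cons p m ih =>
    have hp := hm p (Multiset.mem_cons_self p m)
    obtain ⟨q, hq, hpq⟩ :=
      hp.exists_mem_multiset_dvd (h ▸ Multiset.dvd_prod (Multiset.mem_cons_self p m))
    obtain rfl := (hn q hq).isAtomM.eq_of_dvd hred hp.1 hpq
    obtain ⟨n, rfl⟩ := Multiset.exists_cons_of_mem hq
    rw [Multiset.prod_cons, Multiset.prod_cons] at h
    rw [ih (fun a ha => hm a (Multiset.mem_cons_of_mem ha))
      (fun a ha => hn a (Multiset.mem_cons_of_mem ha)) (mul_left_cancel h)]

variable (M) in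
def primeSubmonoid : Submonoid M := Submonoid.closure {p | IsPrimeM p}

theorem IsPrimeM.mem_primeSubmonoid {p : M} (hp : IsPrimeM p) : p ∈ primeSubmonoid M :=
  Submonoid.subset_closure hp

theorem mem_primeSubmonoid_iff {x : M} :
    x ∈ primeSubmonoid M ↔ ∃ m : Multiset M, (∀ p ∈ m, IsPrimeM p) ∧ m.prod = x :=
  ⟨Submonoid.exists_multiset_of_mem_closure, fun ⟨m, hm, hx⟩ =>
    hx ▸ Submonoid.multiset_prod_mem _ m fun p hp => (hm p hp).mem_primeSubmonoid⟩

theorem mem_primeSubmonoid_of_dvd (hred : IsReducedM M) {x y : M} (hx : x ∈ primeSubmonoid M)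
    (hy : y ∣ x) : y ∈ primeSubmonoid M := by
  obtain ⟨m, hm, rfl⟩ := mem_primeSubmonoid_iff.1 hx
  clear hx
  induction m using Multiset.induction generalizing y with
  | empty => rw [hred y (isUnit_of_dvd_one (by simpa using hy))]; exact one_mem _
  | cons p m ih =>
    have hp := hm p (Multiset.mem_cons_self p m)
    have hm' : ∀ q ∈ m, IsPrimeM q := fun q hq => hm q (Multiset.mem_cons_of_mem hq)
    obtain ⟨z, hz⟩ := hy
    rw [Multiset.prod_cons] at hz
    rcases hp.2 y z (hz ▸ dvd_mul_right p _) with ⟨y, rfl⟩ | ⟨z, rfl⟩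
    · exact mul_mem hp.mem_primeSubmonoid
        (ih hm' ⟨z, mul_left_cancel (a := p) (by rw [hz, mul_assoc])⟩)
    · exact ih hm' ⟨z, mul_left_cancel (a := p) (by rw [hz, mul_left_comm])⟩

theorem IsAtomM.isPrimeM_of_mem_primeSubmonoid (hred : IsReducedM M) {a : M} (ha : IsAtomM a)
    (h : a ∈ primeSubmonoid M) : IsPrimeM a := by
  obtain ⟨m, hm, rfl⟩ := mem_primeSubmonoid_iff.1 h
  obtain ⟨p, hp⟩ : ∃ p, p ∈ m :=
    Multiset.exists_mem_of_ne_zero (by rintro rfl; exact ha.1 (by simp))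
  exact ha.eq_of_dvd hred (hm p hp).1 (Multiset.dvd_prod hp) ▸ hm p hp

theorem IsPrimeM.isStrongAtomM (hred : IsReducedM M) {p : M} (hp : IsPrimeM p) :
    IsStrongAtomM p := by
  refine ⟨hp.isAtomM, fun n _ s hs hprod => ?_⟩
  have hpow : p ^ n ∈ primeSubmonoid M := pow_mem hp.mem_primeSubmonoid n
  refine multiset_eq_of_prod_eq_of_isPrimeM hred (fun a ha => ?_)
    (fun q hq => Multiset.eq_of_mem_replicate hq ▸ hp) (by rw [hprod, Multiset.prod_replicate])
  exact (hs a ha).isPrimeM_of_mem_primeSubmonoid hred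
    (mem_primeSubmonoid_of_dvd hred hpow (hprod ▸ Multiset.dvd_prod ha))

variable (M) in
def HasUniqueAtomFactorization : Prop :=
  ∀ x : M, ∃ s : Multiset M, (∀ a ∈ s, IsAtomM a) ∧ s.prod = x ∧
    ∀ t : Multiset M, (∀ a ∈ t, IsAtomM a) → t.prod = x → t = s

theorem HasUniqueAtomFactorization.isPrimeM_of_isAtomM (hU : HasUniqueAtomFactorization M)
    {a : M} (ha : IsAtomM a) : IsPrimeM a := by
  refine ⟨ha.1, fun b c ⟨d, hd⟩ => ?_⟩
  obtain ⟨sb, hsb, rfl, -⟩ := hU b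
  obtain ⟨sc, hsc, rfl, -⟩ := hU c
  obtain ⟨sd, hsd, rfl, -⟩ := hU d
  obtain ⟨s, -, -, huniq⟩ := hU (sb.prod * sc.prod)
  have hmem : a ∈ sb + sc := by
    rw [huniq (sb + sc) (fun q hq => (Multiset.mem_add.1 hq).elim (hsb q) (hsc q))
      (Multiset.prod_add _ _), ← huniq (a ::ₘ sd)
      (fun q hq => (Multiset.mem_cons.1 hq).elim (· ▸ ha) (hsd q))
      (by rw [Multiset.prod_cons, hd])]
    exact Multiset.mem_cons_self a sd
  exact (Multiset.mem_add.1 hmem).imp Multiset.dvd_prod Multiset.dvd_prod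

theorem hasUniqueAtomFactorization_iff_primeSubmonoid_eq_top (hred : IsReducedM M) :
    HasUniqueAtomFactorization M ↔ primeSubmonoid M = ⊤ := by
  refine ⟨fun hU => (Submonoid.eq_top_iff' _).2 fun x => ?_, fun htop x => ?_⟩
  · obtain ⟨s, hs, rfl, -⟩ := hU x
    exact Submonoid.multiset_prod_mem _ s fun a ha =>
      (hU.isPrimeM_of_isAtomM (hs a ha)).mem_primeSubmonoid
  · obtain ⟨m, hm, rfl⟩ := mem_primeSubmonoid_iff.1 (htop ▸ Submonoid.mem_top x)
    refine ⟨m, fun p hp => (hm p hp).isAtomM, rfl, fun t ht htm =>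
      multiset_eq_of_prod_eq_of_isPrimeM hred (fun a ha => ?_) hm htm⟩
    exact (ht a ha).isPrimeM_of_mem_primeSubmonoid hred (htop ▸ Submonoid.mem_top a)

theorem one_le_of_mem_primeSubmonoid {f : M →* ℝ} (hf : ∀ p : M, IsPrimeM p → 1 < f p)
    {x : M} (hx : x ∈ primeSubmonoid M) : 1 ≤ f x := by
  induction hx using Submonoid.closure_induction with
  | mem p hp => exact (hf p hp).le
  | one => simp
  | mul a b _ _ ha hb => rw [map_mul]; exact one_le_mul_of_one_le_of_one_le ha hb

section PowerBox

variable {ι : Type*} [Fintype ι]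

open Classical in
noncomputable def powerBox (q : ι → M) (N : ℕ) : Finset M :=
  (Fintype.piFinset fun _ : ι => range (N + 1)).image fun e => ∏ i, q i ^ e i

theorem mem_powerBox {q : ι → M} {N : ℕ} {x : M} :
    x ∈ powerBox q N ↔ ∃ e : ι → ℕ, (∀ i, e i ≤ N) ∧ ∏ i, q i ^ e i = x := by
  simp [powerBox]

theorem mem_primeSubmonoid_of_mem_powerBox {q : ι → M} (hq : ∀ i, IsPrimeM (q i)) {N : ℕ}
    {x : M} (hx : x ∈ powerBox q N) : x ∈ primeSubmonoid M := by
  obtain ⟨e, -, rfl⟩ := mem_powerBox.1 hx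
  exact prod_mem fun i _ => pow_mem (hq i).mem_primeSubmonoid _

theorem prod_pow_injective (hred : IsReducedM M) {q : ι → M} (hq : ∀ i, IsPrimeM (q i))
    (hinj : Function.Injective q) : Function.Injective fun e : ι → ℕ => ∏ i, q i ^ e i := by
  classical
  let factors : (ι → ℕ) → Multiset M := fun e => ∑ i, Multiset.replicate (e i) (q i)
  have hprime : ∀ e, ∀ p ∈ factors e, IsPrimeM p := fun e p hp => by
    obtain ⟨i, -, hi⟩ := Multiset.mem_sum.1 hp
    exact Multiset.eq_of_mem_replicate hi ▸ hq i
  have hprod : ∀ e, (factors e).prod = ∏ i, q i ^ e i := fun e => by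
    simp [factors, Multiset.prod_sum]
  intro a b hab
  have hfactors := multiset_eq_of_prod_eq_of_isPrimeM hred (hprime a) (hprime b)
    (by rw [hprod, hprod]; exact hab)
  funext j
  simpa [factors, Multiset.count_sum', Multiset.count_replicate, hinj.eq_iff] using
    congrArg (Multiset.count (q j)) hfactors

theorem sum_one_div_powerBox {K : Type*} [Semifield K] (hred : IsReducedM M) {q : ι → M}
    (hq : ∀ i, IsPrimeM (q i)) (hinj : Function.Injective q) (f : M →* K) (N : ℕ) :
    ∑ x ∈ powerBox q N, 1 / f x = ∏ i, ∑ k ∈ range (N + 1), (1 / f (q i)) ^ k := by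
  classical
  rw [powerBox, sum_image fun a _ b _ h => prod_pow_injective hred hq hinj h,
    ← sum_prod_piFinset]
  refine sum_congr rfl fun e _ => ?_
  simp [map_prod, prod_inv_distrib]

end PowerBox

theorem hasSum_one_div_pow {c : ℝ} (hc : 1 < c) :
    HasSum (fun k : ℕ => (1 / c) ^ k) (1 / (1 - 1 / c)) := by
  rw [one_div (1 - _)]
  exact hasSum_geometric_of_lt_one (by positivity) ((div_lt_one (by linarith)).2 hc)

theorem exists_subset_powerBox (S : Finset M) (hS : ∀ x ∈ S, x ∈ primeSubmonoid M) :
    ∃ (t : Finset {p : M // IsPrimeM p}) (N : ℕ), S ⊆ powerBox (fun p : t => (p : M)) N := by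
  classical
  have hrange : primeSubmonoid M =
      Submonoid.closure (Set.range ((↑) : {p : M // IsPrimeM p} → M)) := by
    rw [Subtype.range_coe_subtype]; rfl
  choose! e he using fun x hx => Submonoid.mem_closure_range_iff.1 (hrange ▸ hS x hx)
  obtain ⟨E, hE⟩ := (S.image e).exists_le
  have hle : ∀ x ∈ S, e x ≤ E := fun x hx => hE _ (mem_image_of_mem e hx)
  refine ⟨E.support, E.support.sup E, fun x hx => mem_powerBox.2
    ⟨fun p => e x p, fun p => (hle x hx p).trans (le_sup p.2), ?_⟩⟩
  calc ∏ p : E.support, (p : M) ^ e x p = ∏ p ∈ E.support, (p : M) ^ e x p :=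
        prod_coe_sort E.support fun p => (p : M) ^ e x p
    _ = x := by
      rw [← Finsupp.prod_of_support_subset _ (Finsupp.support_mono (hle x hx))
        (fun p n => (p : M) ^ n) fun _ _ => pow_zero _, ← he x hx]

theorem Summable.bddAbove_prod_one_div_one_sub {α : Type*} {u : α → ℝ} (hu : Summable u)
    (h0 : ∀ i, 0 ≤ u i) (h1 : ∀ i, u i < 1) :
    BddAbove {y | ∃ t : Finset α, y = ∏ i ∈ t, 1 / (1 - u i)} := by
  have hpos : ∀ i, 0 < 1 - u i := fun i => sub_pos.2 (h1 i)
  have hg0 : ∀ i, 0 ≤ u i / (1 - u i) := fun i => div_nonneg (h0 i) (hpos i).le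
  have hg : Summable fun i => u i / (1 - u i) := by
    refine (hu.mul_left 2).of_norm_bounded_eventually ?_
    filter_upwards [hu.tendsto_cofinite_zero.eventually_le_const one_half_pos] with i hi
    rw [Real.norm_of_nonneg (hg0 i), div_le_iff₀ (hpos i)]
    nlinarith [h0 i]
  refine ⟨Real.exp (∑' i, u i / (1 - u i)), ?_⟩
  rintro _ ⟨t, rfl⟩
  calc ∏ i ∈ t, 1 / (1 - u i) = ∏ i ∈ t, (u i / (1 - u i) + 1) :=
        prod_congr rfl fun i _ => by field_simp [(hpos i).ne']; ring
    _ ≤ ∏ i ∈ t, Real.exp (u i / (1 - u i)) :=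
        prod_le_prod (fun i _ => by linarith [hg0 i]) fun i _ => Real.add_one_le_exp _
    _ = Real.exp (∑ i ∈ t, u i / (1 - u i)) := (Real.exp_sum _ _).symm
    _ ≤ Real.exp (∑' i, u i / (1 - u i)) :=
        Real.exp_le_exp.2 (hg.sum_le_tsum t fun i _ => hg0 i)

theorem SumConvergesTo.hasSum {α : Type*} {u : α → ℝ} {l : ℝ} (h : SumConvergesTo u l)
    (h0 : ∀ i, 0 ≤ u i) : HasSum u l := by
  have hrange : Set.range (fun s : Finset α => ∑ i ∈ s, u i) =
      {y | ∃ s : Finset α, y = ∑ i ∈ s, u i} :=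
    Set.ext fun _ => exists_congr fun _ => eq_comm
  exact hasSum_of_isLUB_of_nonneg l h0 (hrange ▸ h)

section EulerProduct

variable {f : M →* ℝ}

theorem sum_one_div_powerBox_primes (hred : IsReducedM M) (t : Finset {p : M // IsPrimeM p})
    (N : ℕ) : ∑ x ∈ powerBox (fun p : t => (p : M)) N, 1 / f x =
      ∏ p ∈ t, ∑ k ∈ range (N + 1), (1 / f p) ^ k := by
  rw [sum_one_div_powerBox hred (q := fun p : t => (p : M)) (fun p => p.1.2)
    (Subtype.val_injective.comp Subtype.val_injective)]
  exact prod_coe_sort t fun p => ∑ k ∈ range (N + 1), (1 / f p) ^ k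

theorem tendsto_sum_one_div_powerBox (hred : IsReducedM M) (hf : ∀ p : M, IsPrimeM p → 1 < f p)
    (t : Finset {p : M // IsPrimeM p}) :
    Tendsto (fun N => ∑ x ∈ powerBox (fun p : t => (p : M)) N, 1 / f x) atTop
      (𝓝 (∏ p ∈ t, 1 / (1 - 1 / f p))) := by
  simp_rw [sum_one_div_powerBox_primes hred]
  exact tendsto_finsetProd _ fun p _ =>
    (hasSum_one_div_pow (hf p p.2)).tendsto_sum_nat.comp (tendsto_add_atTop_nat 1)

theorem sum_one_div_powerBox_le (hred : IsReducedM M) (hf : ∀ p : M, IsPrimeM p → 1 < f p)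
    (t : Finset {p : M // IsPrimeM p}) (N : ℕ) :
    ∑ x ∈ powerBox (fun p : t => (p : M)) N, 1 / f x ≤ ∏ p ∈ t, 1 / (1 - 1 / f p) := by
  have hnonneg : ∀ p : {p : M // IsPrimeM p}, 0 ≤ 1 / f p := fun p =>
    one_div_nonneg.2 (zero_le_one.trans (hf p p.2).le)
  rw [sum_one_div_powerBox_primes hred]
  exact prod_le_prod (fun p _ => sum_nonneg fun k _ => pow_nonneg (hnonneg p) k) fun p _ =>
    sum_le_hasSum _ (fun k _ => pow_nonneg (hnonneg p) k) (hasSum_one_div_pow (hf p p.2))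

theorem exists_sumConvergesTo_and_prodConvergesTo_of_primeSubmonoid_eq_top (hred : IsReducedM M)
    (hf : ∀ p : M, IsPrimeM p → 1 < f p) (htop : primeSubmonoid M = ⊤)
    (hsum : Summable fun p : {p : M // IsPrimeM p} => 1 / f p) :
    ∃ l : ℝ, SumConvergesTo (fun x : M => 1 / f x) l ∧
      ProdConvergesTo (fun p : {p : M // IsPrimeM p} => 1 / (1 - 1 / f p)) l := by
  have hmem : ∀ x : M, x ∈ primeSubmonoid M := fun x => htop ▸ Submonoid.mem_top x
  have hnonneg : ∀ x : M, 0 ≤ 1 / f x := fun x =>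
    one_div_nonneg.2 (zero_le_one.trans (one_le_of_mem_primeSubmonoid hf (hmem x)))
  have hlt : ∀ p : {p : M // IsPrimeM p}, 1 / f p < 1 := fun p =>
    (div_lt_one (zero_lt_one.trans (hf p p.2))).2 (hf p p.2)
  have hbdd := hsum.bddAbove_prod_one_div_one_sub (fun p => hnonneg p) hlt
  obtain ⟨l, hl⟩ := Real.exists_isLUB ⟨1, Set.mem_ofPred.2 ⟨∅, by simp⟩⟩ hbdd
  refine ⟨l, ⟨?_, fun u hu => hl.2 ?_⟩, hl⟩
  · rintro _ ⟨S, rfl⟩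
    obtain ⟨t, N, hS⟩ := exists_subset_powerBox S fun x _ => hmem x
    calc ∑ x ∈ S, 1 / f x ≤ ∑ x ∈ powerBox (fun p : t => (p : M)) N, 1 / f x :=
          sum_le_sum_of_subset_of_nonneg hS fun x _ _ => hnonneg x
      _ ≤ ∏ p ∈ t, 1 / (1 - 1 / f p) := sum_one_div_powerBox_le hred hf t N
      _ ≤ l := hl.1 ⟨t, rfl⟩
  · rintro _ ⟨t, rfl⟩
    exact le_of_tendsto' (tendsto_sum_one_div_powerBox hred hf t) fun N => hu ⟨_, rfl⟩

theorem primeSubmonoid_eq_top_of_sumConvergesTo_of_prodConvergesTo (hred : IsReducedM M)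
    (hf : ∀ p : M, IsPrimeM p → 1 < f p) (hf0 : ∀ x, f x ≠ 0) {l : ℝ}
    (hsum : SumConvergesTo (fun x : M => 1 / f x) l)
    (hprod : ProdConvergesTo (fun p : {p : M // IsPrimeM p} => 1 / (1 - 1 / f p)) l) :
    primeSubmonoid M = ⊤ := by
  classical
  refine (Submonoid.eq_top_iff' _).2 fun x => by_contra fun hx => ?_
  -- `x * x` rather than `x`: off the prime submonoid `f` may be negative, but `f (x * x) > 0`.
  have hxx : x * x ∉ primeSubmonoid M := fun h =>
    hx (mem_primeSubmonoid_of_dvd hred h (dvd_mul_right x x))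
  have hε : 0 < 1 / f (x * x) := by rw [map_mul]; exact one_div_pos.2 (mul_self_pos.2 (hf0 x))
  have hbound : l ≤ l - 1 / f (x * x) := hprod.2 <| by
    rintro _ ⟨t, rfl⟩
    refine le_of_tendsto' (tendsto_sum_one_div_powerBox hred hf t) fun N => ?_
    have hnot : x * x ∉ powerBox (fun p : t => (p : M)) N := fun h =>
      hxx (mem_primeSubmonoid_of_mem_powerBox (fun p => p.1.2) h)
    have := hsum.1 ⟨insert (x * x) (powerBox (fun p : t => (p : M)) N), rfl⟩
    rw [sum_insert hnot] at this
    linarith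
  linarith

end EulerProduct

end

theorem UFM_iff_euler_product_general
    {M : Type*} [CancelCommMonoid M] (hred : IsReducedM M)
    (σ : M →* ℝˣ) (hσ : ∀ a : M, IsStrongAtomM a → 1 < ((σ a : ℝˣ) : ℝ))
    (hconv : ∃ l : ℝ, SumConvergesTo
      (fun a : {a : M // IsStrongAtomM a} => 1 / ((σ ↑a : ℝˣ) : ℝ)) l) :
    (∀ x : M, ∃ s : Multiset M, (∀ a ∈ s, IsAtomM a) ∧ s.prod = x ∧
        ∀ t : Multiset M, (∀ a ∈ t, IsAtomM a) → t.prod = x → t = s) ↔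
      (∃ l : ℝ, SumConvergesTo (fun x : M => 1 / ((σ x : ℝˣ) : ℝ)) l ∧
        ProdConvergesTo (fun p : {p : M // IsPrimeM p} => 1 / (1 - 1 / ((σ ↑p : ℝˣ) : ℝ))) l) := by
  obtain ⟨f, hσf⟩ : ∃ f : M →* ℝ, ∀ x, ((σ x : ℝˣ) : ℝ) = f x :=
    ⟨(Units.coeHom ℝ).comp σ, fun _ => rfl⟩
  simp only [hσf] at hσ hconv ⊢
  have hf : ∀ p : M, IsPrimeM p → 1 < f p := fun p hp => hσ p (hp.isStrongAtomM hred)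
  refine (hasUniqueAtomFactorization_iff_primeSubmonoid_eq_top hred).trans ⟨fun htop => ?_, ?_⟩
  · obtain ⟨L, hL⟩ := hconv
    have hinj : Function.Injective fun p : {p : M // IsPrimeM p} =>
        (⟨p, p.2.isStrongAtomM hred⟩ : {a : M // IsStrongAtomM a}) :=
      fun p q h => Subtype.ext (Subtype.mk_eq_mk.mp h)
    have hsum := (hL.hasSum fun a => one_div_nonneg.2 (zero_le_one.trans (hσ a a.2).le)).summable
      |>.comp_injective hinj
    exact exists_sumConvergesTo_and_prodConvergesTo_of_primeSubmonoid_eq_top hred hf htop hsum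
  · rintro ⟨l, hsum, hprod⟩
    exact primeSubmonoid_eq_top_of_sumConvergesTo_of_prodConvergesTo hred hf
      (fun x => hσf x ▸ (σ x).ne_zero) hsum hprod

/-- Let `M` be a reduced Krull monoid with torsion class group, with a scale `σ` such that
`∑_{a ∈ S(M)} 1/σ(a)` converges. Then `M` is a unique factorization monoid iff Euler's
classical product formula holds: `∑_{x ∈ M} 1/σ(x) = ∏_{p ∈ P(M)} 1/(1 - 1/σ(p))`. -/
theorem UFM_iff_euler_product
    {M ι : Type*} [CancelCommMonoid M] (τ : M →* Multiplicative (ι →₀ ℕ))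
    (hdt : IsDivisorTheory τ) (htor : HasTorsionClassGroup τ) (hred : IsReducedM M)
    (σ : M →* ℝˣ) (hσ : ∀ a : M, IsStrongAtomM a → 1 < ((σ a : ℝˣ) : ℝ))
    (hconv : ∃ l : ℝ, SumConvergesTo
      (fun a : {a : M // IsStrongAtomM a} => 1 / ((σ ↑a : ℝˣ) : ℝ)) l) :
    (∀ x : M, ∃ s : Multiset M, (∀ a ∈ s, IsAtomM a) ∧ s.prod = x ∧
        ∀ t : Multiset M, (∀ a ∈ t, IsAtomM a) → t.prod = x → t = s) ↔
      (∃ l : ℝ, SumConvergesTo (fun x : M => 1 / ((σ x : ℝˣ) : ℝ)) l ∧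
        ProdConvergesTo (fun p : {p : M // IsPrimeM p} => 1 / (1 - 1 / ((σ ↑p : ℝˣ) : ℝ))) l) :=
  UFM_iff_euler_product_general hred σ hσ hconv
end
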